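/- arXiv:1904.02961 — 2 statements merged into one kernel-verified Lean document; each statement's English description precedes it below -/
import Mathlib

section
/- Fix A > 0 and λ ∈ (0, 1/8), and set ξ = √(1 − 8λ) ∈ (0, 1). Let C = ((1 − ξ)/(2·Γ(1 − ξ))) · (A/2)^{(1+ξ)/2} · Γ((1 − ξ)/2) · ₁F₁[−(1 + ξ)/2; 1 − ξ; 2/A], and define, for s in the domain where all terms make sense, F(s) = (2λ A^s)/(s(s−1) + 2λ) · ₂F₂[1, −s; 3/2 + ξ/2 − s, 3/2 − ξ/2 − s; 2/A] + C · 2^s · Γ(1/2 + ξ/2 − s) · Γ(1/2 − ξ/2 − s) / Γ(−s). Then the limit of F(1/2 + ξ/2 + ε) as ε → 0 (ε ≠ 0) exists and equals (2λ/ξ) · A^{1/2 + ξ/2} · Σ_{j=0}^{∞} ( (−(1+ξ)/2)_j / (j! · (1 − ξ)_j) ) · (2/A)^j · [ ψ(1 + j) + ψ(1 − ξ + j) − ψ(−(1+ξ)/2 + j) − log(2/A) ], where ψ = Γ'/Γ is the digamma function. -/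
/-- The Pochhammer symbol (rising factorial): `(z)₀ = 1`, `(z)_{n+1} = (z)_n · (z + n)`. -/
noncomputable def poch (z : ℝ) : ℕ → ℝ
  | 0 => 1
  | n + 1 => poch z n * (z + (n : ℝ))

/-- The generalized hypergeometric series `₂F₂[a₁,a₂; b₁,b₂; z]`. -/
noncomputable def F22 (a₁ a₂ b₁ b₂ z : ℝ) : ℝ :=
  ∑' n : ℕ, poch a₁ n * poch a₂ n / (poch b₁ n * poch b₂ n) * z ^ n / (Nat.factorial n : ℝ)

/-- The confluent hypergeometric (Kummer) series `₁F₁[a; b; z]`. -/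
noncomputable def F11 (a b z : ℝ) : ℝ :=
  ∑' n : ℕ, poch a n / poch b n * z ^ n / (Nat.factorial n : ℝ)

/-- The digamma function `ψ = Γ'/Γ`. -/
noncomputable def digamma (x : ℝ) : ℝ := deriv Real.Gamma x / Real.Gamma x

/-! Put `s = (1 + ξ)/2 + ε`. Since `(1 ± ξ)/2` are the roots of `s(s - 1) + 2λ`, that quadratic
equals `ε(ε + ξ)`, and `Γ(1/2 + ξ/2 - s) = Γ(-ε) = -Γ(1 - ε)/ε`; hence `F(s) = H(ε)/ε` with `H`
differentiable at `0`, and `C` is precisely the constant making `H(0) = 0`, so the limit is `H'(0)`.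
The only non-elementary part of `H` is the `₂F₂` series, which at `ε = 0` is the `₁F₁` series;
it is differentiated term by term. Its `n`-th term is a product of `n` rational factors that,
together with their derivatives, are `O(1/(k + 1))` uniformly near `ε = 0`, which gives the
majorant `(2M)ⁿ/n!`. At `ε = 0` the logarithmic derivative of the `n`-th term is
`∑_{k<n} (1/(1 + k) + 1/(1 - ξ + k) - 1/(a + k))`, `a = -(1 + ξ)/2`, and the recurrence
`ψ(x + 1) = ψ(x) + 1/x` turns it into digamma differences. -/

open Filter Topology Finset
open scoped Nat

lemma poch_eq_prod (x : ℝ) (n : ℕ) : poch x n = ∏ k ∈ range n, (x + k) := by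
  induction n with
  | zero => rfl
  | succ n ih => rw [poch, ih, prod_range_succ]

lemma poch_one (n : ℕ) : poch 1 n = n ! := by
  rw [poch_eq_prod, ← prod_range_add_one_eq_factorial]
  push_cast
  simp only [add_comm]

lemma ne_neg_natCast_of_pos {x : ℝ} (hx : 0 < x) (m : ℕ) : x ≠ -m := by
  have : (0 : ℝ) ≤ m := m.cast_nonneg
  linarith

lemma ne_neg_natCast_of_mem_Ioo {x : ℝ} (hx : x ∈ Set.Ioo (-1) 0) (m : ℕ) : x ≠ -m := by
  obtain ⟨h₁, h₂⟩ := hx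
  rcases m with _ | m
  · simpa using h₂.ne
  · push_cast
    linarith [(m.cast_nonneg : (0 : ℝ) ≤ m)]

lemma hasDerivAt_Gamma {x : ℝ} (hx : ∀ m : ℕ, x ≠ -m) :
    HasDerivAt Real.Gamma (digamma x * Real.Gamma x) x := by
  rw [digamma, div_mul_cancel₀ _ (Real.Gamma_ne_zero hx)]
  exact (Real.differentiableAt_Gamma hx).hasDerivAt

lemma digamma_add_one {x : ℝ} (hx : ∀ m : ℕ, x ≠ -m) : digamma (x + 1) = digamma x + 1 / x := by
  have hx₀ : x ≠ 0 := by simpa using hx 0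
  have hderiv : deriv Real.Gamma (x + 1) = 1 * Real.Gamma x + x * deriv Real.Gamma x := by
    have h : (fun y => Real.Gamma (y + 1)) =ᶠ[𝓝 x] fun y => y * Real.Gamma y := by
      filter_upwards [isOpen_ne.mem_nhds hx₀] with y hy using Real.Gamma_add_one hy
    rw [← deriv_comp_add_const, h.deriv_eq]
    exact ((hasDerivAt_id' x).mul (Real.differentiableAt_Gamma hx).hasDerivAt).deriv
  rw [digamma, digamma, hderiv, Real.Gamma_add_one hx₀]
  field_simp [Real.Gamma_ne_zero hx]
  ring

lemma digamma_add_nat_sub {x : ℝ} (hx : ∀ m : ℕ, x ≠ -m) (n : ℕ) :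
    digamma (x + n) - digamma x = ∑ k ∈ range n, 1 / (x + k) := by
  induction n with
  | zero => simp
  | succ n ih =>
    have hxn : ∀ m : ℕ, x + n ≠ -m := fun m h => hx (m + n) (by push_cast; linarith)
    rw [Nat.cast_succ, ← add_assoc, digamma_add_one hxn, sum_range_succ, ← ih]
    ring

lemma prod_range_div_succ (M : ℝ) (n : ℕ) : ∏ k ∈ range n, M / ((k : ℝ) + 1) = M ^ n / n ! := by
  rw [prod_div_distrib, prod_const, card_range, ← prod_range_add_one_eq_factorial]
  push_cast
  rfl

section ProdSeries

variable {M : ℝ}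

lemma abs_prod_le_of_abs_le {f : ℕ → ℝ} (hf : ∀ k, |f k| ≤ M / (k + 1)) (s : Finset ℕ) :
    |∏ k ∈ s, f k| ≤ ∏ k ∈ s, M / ((k : ℝ) + 1) := by
  rw [abs_prod]
  exact prod_le_prod (fun _ _ => abs_nonneg _) fun k _ => hf k

lemma abs_prod_range_le {f : ℕ → ℝ} (hf : ∀ k, |f k| ≤ M / (k + 1)) (n : ℕ) :
    |∏ k ∈ range n, f k| ≤ M ^ n / n ! :=
  prod_range_div_succ M n ▸ abs_prod_le_of_abs_le hf _

lemma abs_sum_prod_erase_mul_le {f g : ℕ → ℝ} (hf : ∀ k, |f k| ≤ M / (k + 1))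
    (hg : ∀ k, |g k| ≤ M / (k + 1)) (n : ℕ) :
    |∑ i ∈ range n, (∏ k ∈ (range n).erase i, f k) * g i| ≤ (2 * M) ^ n / n ! := by
  have hM : 0 ≤ M := by simpa using (abs_nonneg _).trans (hf 0)
  have hterm : ∀ i ∈ range n, |(∏ k ∈ (range n).erase i, f k) * g i| ≤ M ^ n / n ! := by
    intro i hi
    rw [abs_mul, ← prod_range_div_succ, ← prod_erase_mul _ _ hi]
    exact mul_le_mul (abs_prod_le_of_abs_le hf _) (hg i) (abs_nonneg _)
      (prod_nonneg fun k _ => by positivity)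
  calc |∑ i ∈ range n, (∏ k ∈ (range n).erase i, f k) * g i|
      ≤ n * (M ^ n / n !) := by
        simpa using (abs_sum_le_sum_abs _ _).trans (sum_le_sum hterm)
    _ ≤ 2 ^ n * (M ^ n / n !) := by
        gcongr
        exact_mod_cast (Nat.lt_two_pow_self).le
    _ = (2 * M) ^ n / n ! := by ring

lemma summable_prod_range_of_abs_le {f : ℕ → ℝ} (hf : ∀ k, |f k| ≤ M / (k + 1)) :
    Summable fun n => ∏ k ∈ range n, f k :=
  .of_norm_bounded (Real.summable_pow_div_factorial M) (abs_prod_range_le hf)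

lemma summable_sum_prod_erase_mul_of_abs_le {f g : ℕ → ℝ} (hf : ∀ k, |f k| ≤ M / (k + 1))
    (hg : ∀ k, |g k| ≤ M / (k + 1)) :
    Summable fun n => ∑ i ∈ range n, (∏ k ∈ (range n).erase i, f k) * g i :=
  .of_norm_bounded (Real.summable_pow_div_factorial (2 * M)) (abs_sum_prod_erase_mul_le hf hg)

theorem hasDerivAt_tsum_prod_range {q q' : ℕ → ℝ → ℝ} {U : Set ℝ} (hU : IsOpen U)
    (hU' : IsPreconnected U) (hq : ∀ k, ∀ x ∈ U, HasDerivAt (q k) (q' k x) x)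
    (hq_le : ∀ x ∈ U, ∀ k, |q k x| ≤ M / (k + 1)) (hq'_le : ∀ x ∈ U, ∀ k, |q' k x| ≤ M / (k + 1))
    {x : ℝ} (hx : x ∈ U) :
    HasDerivAt (fun y => ∑' n, ∏ k ∈ range n, q k y)
      (∑' n, ∑ i ∈ range n, (∏ k ∈ (range n).erase i, q k x) * q' i x) x := by
  refine hasDerivAt_tsum_of_isPreconnected (g := fun n y => ∏ k ∈ range n, q k y)
    (g' := fun n y => ∑ i ∈ range n, (∏ k ∈ (range n).erase i, q k y) * q' i y)
    (Real.summable_pow_div_factorial (2 * M)) hU hU' (fun n y hy => ?_)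
    (fun n y hy => abs_sum_prod_erase_mul_le (hq_le y hy) (hq'_le y hy) n) hx
    (summable_prod_range_of_abs_le (hq_le x hx)) hx
  simpa using HasDerivAt.fun_finsetProd fun k _ => hq k y hy

end ProdSeries

noncomputable def pochTerm (a b c z : ℝ) (n : ℕ) : ℝ := poch a n / (poch b n * poch c n) * z ^ n

noncomputable def pochFactor (a b c z : ℝ) (k : ℕ) : ℝ := (a + k) * z / ((b + k) * (c + k))

noncomputable def pochFactorDeriv (a b c z : ℝ) (k : ℕ) : ℝ :=
  pochFactor a b c z k * (1 / (b + k) + 1 / (c + k)) - z / ((b + k) * (c + k))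

lemma pochTerm_eq_prod (a b c z : ℝ) (n : ℕ) :
    pochTerm a b c z n = ∏ k ∈ range n, pochFactor a b c z k := by
  simp only [pochTerm, pochFactor, poch_eq_prod, prod_div_distrib, prod_mul_distrib, prod_const,
    card_range, div_mul_eq_mul_div]

lemma F22_one_eq_tsum_pochTerm (a b c z : ℝ) : F22 1 a b c z = ∑' n, pochTerm a b c z n := by
  refine tsum_congr fun n => ?_
  rw [pochTerm, poch_one, mul_div_assoc (n ! : ℝ), mul_assoc, mul_div_cancel_left₀]
  exact_mod_cast n.factorial_ne_zero

lemma F11_eq_tsum_pochTerm (a c z : ℝ) : F11 a c z = ∑' n, pochTerm a 1 c z n := by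
  refine tsum_congr fun n => ?_
  rw [pochTerm, poch_one, mul_comm (n ! : ℝ), ← div_div]
  ring

lemma hasDerivAt_pochFactor_sub {a b c z ε : ℝ} {k : ℕ} (hb : b - ε + k ≠ 0)
    (hc : c - ε + k ≠ 0) :
    HasDerivAt (fun t => pochFactor (a - t) (b - t) (c - t) z k)
      (pochFactorDeriv (a - ε) (b - ε) (c - ε) z k) ε := by
  have hlin : ∀ x : ℝ, HasDerivAt (fun t => x - t + k) (-1) ε := fun x =>
    ((hasDerivAt_id ε).const_sub x).add_const _
  refine (((hlin a).mul_const z).div ((hlin b).mul (hlin c)) (mul_ne_zero hb hc)).congr_deriv ?_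
  simp only [pochFactorDeriv, pochFactor, Pi.mul_apply]
  field_simp
  ring

lemma pochFactorDeriv_eq_mul {a b c z : ℝ} {k : ℕ} (ha : a + k ≠ 0) :
    pochFactorDeriv a b c z k =
      pochFactor a b c z k * (1 / (b + k) + 1 / (c + k) - 1 / (a + k)) := by
  simp only [pochFactorDeriv, pochFactor]
  field_simp

section Bounds

variable {α β a b c z : ℝ} {k : ℕ}

lemma abs_pochFactor_le (hβ : 0 < β) (hβ₁ : β ≤ 1) (ha : |a + k| ≤ α * (k + 1))
    (hb : β * (k + 1) ≤ b + k) (hc : β * (k + 1) ≤ c + k) :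
    |pochFactor a b c z k| ≤ (2 * α + 1) * |z| / β ^ 3 / (k + 1) := by
  have hk : (0 : ℝ) < k + 1 := by positivity
  have hβk : 0 < β * (k + 1) := by positivity
  have hα : 0 ≤ α := nonneg_of_mul_nonneg_left ((abs_nonneg _).trans ha) hk
  have hbc : 0 < (b + k) * (c + k) := mul_pos (hβk.trans_le hb) (hβk.trans_le hc)
  rw [pochFactor, abs_div, abs_mul, abs_of_pos hbc, div_div, div_le_div_iff₀ hbc (by positivity)]
  calc |a + k| * |z| * (β ^ 3 * (k + 1)) ≤ α * (k + 1) * |z| * (β ^ 3 * (k + 1)) := by gcongr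
    _ = (α * |z| * β) * ((β * (k + 1)) * (β * (k + 1))) := by ring
    _ ≤ ((2 * α + 1) * |z|) * ((b + k) * (c + k)) := by
        refine mul_le_mul ?_ (mul_le_mul hb hc hβk.le (hβk.le.trans hb)) (by positivity)
          (by positivity)
        nlinarith [mul_nonneg hα (abs_nonneg z), abs_nonneg z]

lemma abs_pochFactorDeriv_le (hβ : 0 < β) (hβ₁ : β ≤ 1) (ha : |a + k| ≤ α * (k + 1))
    (hb : β * (k + 1) ≤ b + k) (hc : β * (k + 1) ≤ c + k) :
    |pochFactorDeriv a b c z k| ≤ (2 * α + 1) * |z| / β ^ 3 / (k + 1) := by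
  have hk : (1 : ℝ) ≤ k + 1 := by simp
  have hβk : 0 < β * (k + 1) := by positivity
  have hα : 0 ≤ α := nonneg_of_mul_nonneg_left ((abs_nonneg _).trans ha) (by positivity)
  have hb₀ : 0 < b + k := hβk.trans_le hb
  have hc₀ : 0 < c + k := hβk.trans_le hc
  have hu : 1 / (b + k) ≤ 1 / (β * (k + 1)) := one_div_le_one_div_of_le hβk hb
  have hv : 1 / (c + k) ≤ 1 / (β * (k + 1)) := one_div_le_one_div_of_le hβk hc
  have hN : |(a + k) * (1 / (b + k) + 1 / (c + k)) - 1| ≤ 2 * α / β + 1 := by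
    calc |(a + k) * (1 / (b + k) + 1 / (c + k)) - 1|
        ≤ |(a + k) * (1 / (b + k) + 1 / (c + k))| + |1| := abs_sub _ _
      _ = |a + k| * (1 / (b + k) + 1 / (c + k)) + 1 := by
          rw [abs_mul, abs_one, abs_of_pos (add_pos (one_div_pos.2 hb₀) (one_div_pos.2 hc₀))]
      _ ≤ α * (k + 1) * (1 / (β * (k + 1)) + 1 / (β * (k + 1))) + 1 := by gcongr
      _ = 2 * α / β + 1 := by field_simp; ring
  have hsplit : pochFactorDeriv a b c z k =
      z * (1 / (b + k)) * (1 / (c + k)) * ((a + k) * (1 / (b + k) + 1 / (c + k)) - 1) := by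
    simp only [pochFactorDeriv, pochFactor]
    field_simp
  rw [hsplit, abs_mul, abs_mul, abs_mul, abs_of_pos (one_div_pos.2 hb₀),
    abs_of_pos (one_div_pos.2 hc₀)]
  calc |z| * (1 / (b + k)) * (1 / (c + k)) * |(a + k) * (1 / (b + k) + 1 / (c + k)) - 1|
      ≤ |z| * (1 / (β * (k + 1))) * (1 / (β * (k + 1))) * (2 * α / β + 1) := by gcongr
    _ ≤ (2 * α + 1) * |z| / β ^ 3 / (k + 1) := by
        rw [div_div, le_div_iff₀ (by positivity)]
        field_simp
        have : 2 * α + β ≤ (k + 1) * (2 * α + 1) := by nlinarith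
        nlinarith [mul_le_mul_of_nonneg_left this (abs_nonneg z)]

end Bounds

section ShiftedSeries

variable {a b c : ℝ}

lemma pochFactor_bounds (hb : 0 < b) (hc : 0 < c) (z : ℝ) :
    ∃ δ > 0, ∃ M, ∀ ε, |ε| < δ → ∀ k : ℕ, 0 < b - ε + k ∧ 0 < c - ε + k ∧
      |pochFactor (a - ε) (b - ε) (c - ε) z k| ≤ M / (k + 1) ∧
      |pochFactorDeriv (a - ε) (b - ε) (c - ε) z k| ≤ M / (k + 1) := by
  obtain ⟨β, hβ, hβb, hβc, hβ₁⟩ : ∃ β > 0, 2 * β ≤ b ∧ 2 * β ≤ c ∧ 2 * β ≤ 1 :=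
    ⟨min (min b c) 1 / 2, by positivity, by grind, by grind, by grind⟩
  refine ⟨β, hβ, (2 * (|a| + 1) + 1) * |z| / β ^ 3, fun ε hε k => ?_⟩
  obtain ⟨hε₁, hε₂⟩ := abs_lt.1 hε
  have hk : (0 : ℝ) ≤ k := k.cast_nonneg
  have ha : |a - ε + k| ≤ (|a| + 1) * (k + 1) := by
    calc |a - ε + k| ≤ |a| + |ε| + k := by
          simpa using (abs_add_le (a - ε) k).trans (add_le_add_left (abs_sub _ _) _)
      _ ≤ (|a| + 1) * (k + 1) := by nlinarith [abs_nonneg a]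
  have hlow : ∀ x, 2 * β ≤ x → β * (k + 1) ≤ x - ε + k := fun x hx => by nlinarith
  have hpos : ∀ x, 2 * β ≤ x → 0 < x - ε + k := fun x hx =>
    (mul_pos hβ (by positivity)).trans_le (hlow x hx)
  exact ⟨hpos b hβb, hpos c hβc,
    abs_pochFactor_le hβ (by linarith) ha (hlow b hβb) (hlow c hβc),
    abs_pochFactorDeriv_le hβ (by linarith) ha (hlow b hβb) (hlow c hβc)⟩

lemma summable_pochTerm (hb : 0 < b) (hc : 0 < c) (z : ℝ) : Summable (pochTerm a b c z) := by
  obtain ⟨δ, hδ, M, hM⟩ := pochFactor_bounds (a := a) hb hc z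
  rw [show pochTerm a b c z = _ from funext (pochTerm_eq_prod a b c z)]
  exact summable_prod_range_of_abs_le fun k => by simpa using (hM 0 (by simpa) k).2.2.1

lemma summable_sum_prod_erase_mul_pochFactorDeriv (hb : 0 < b) (hc : 0 < c) (z : ℝ) :
    Summable fun n => ∑ i ∈ range n,
      (∏ k ∈ (range n).erase i, pochFactor a b c z k) * pochFactorDeriv a b c z i := by
  obtain ⟨δ, hδ, M, hM⟩ := pochFactor_bounds (a := a) hb hc z
  exact summable_sum_prod_erase_mul_of_abs_le (fun k => by simpa using (hM 0 (by simpa) k).2.2.1)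
    fun k => by simpa using (hM 0 (by simpa) k).2.2.2

theorem hasDerivAt_tsum_pochTerm_sub' (hb : 0 < b) (hc : 0 < c) (z : ℝ) :
    HasDerivAt (fun ε => ∑' n, pochTerm (a - ε) (b - ε) (c - ε) z n)
      (∑' n, ∑ i ∈ range n,
        (∏ k ∈ (range n).erase i, pochFactor a b c z k) * pochFactorDeriv a b c z i) 0 := by
  obtain ⟨δ, hδ, M, hM⟩ := pochFactor_bounds (a := a) hb hc z
  simp only [pochTerm_eq_prod]
  simpa using hasDerivAt_tsum_prod_range (M := M) (U := Metric.ball 0 δ)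
    (q := fun k ε => pochFactor (a - ε) (b - ε) (c - ε) z k)
    (q' := fun k ε => pochFactorDeriv (a - ε) (b - ε) (c - ε) z k)
    Metric.isOpen_ball (convex_ball 0 δ).isPreconnected
    (fun k ε hε => hasDerivAt_pochFactor_sub
      (hM ε (mem_ball_zero_iff.1 hε) k).1.ne' (hM ε (mem_ball_zero_iff.1 hε) k).2.1.ne')
    (fun ε hε k => (hM ε (mem_ball_zero_iff.1 hε) k).2.2.1)
    (fun ε hε k => (hM ε (mem_ball_zero_iff.1 hε) k).2.2.2) (Metric.mem_ball_self hδ)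

lemma sum_prod_erase_mul_pochFactorDeriv (ha : ∀ m : ℕ, a ≠ -m) (hb : ∀ m : ℕ, b ≠ -m)
    (hc : ∀ m : ℕ, c ≠ -m) (z : ℝ) (n : ℕ) :
    ∑ i ∈ range n, (∏ k ∈ (range n).erase i, pochFactor a b c z k) * pochFactorDeriv a b c z i =
      pochTerm a b c z n * (digamma (b + n) - digamma b + (digamma (c + n) - digamma c) -
        (digamma (a + n) - digamma a)) := by
  rw [digamma_add_nat_sub ha, digamma_add_nat_sub hb, digamma_add_nat_sub hc, ← sum_add_distrib,
    ← sum_sub_distrib, mul_sum, pochTerm_eq_prod]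
  refine sum_congr rfl fun i hi => ?_
  rw [pochFactorDeriv_eq_mul fun h => ha i (eq_neg_of_add_eq_zero_left h), ← mul_assoc,
    prod_erase_mul _ _ hi]

theorem hasDerivAt_tsum_pochTerm_sub (ha : ∀ m : ℕ, a ≠ -m) (hb : 0 < b) (hc : 0 < c) (z : ℝ) :
    HasDerivAt (fun ε => ∑' n, pochTerm (a - ε) (b - ε) (c - ε) z n)
      (∑' n, pochTerm a b c z n * (digamma (b + n) - digamma b + (digamma (c + n) - digamma c) -
        (digamma (a + n) - digamma a))) 0 := by
  simpa only [sum_prod_erase_mul_pochFactorDeriv ha (ne_neg_natCast_of_pos hb)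
    (ne_neg_natCast_of_pos hc)] using hasDerivAt_tsum_pochTerm_sub' (a := a) hb hc z

lemma tsum_pochTerm_mul_digamma (ha : ∀ m : ℕ, a ≠ -m) (hb : 0 < b) (hc : 0 < c) (z L : ℝ) :
    ∑' n, pochTerm a b c z n * (digamma (b + n) + digamma (c + n) - digamma (a + n) - L) =
      ∑' n, pochTerm a b c z n * (digamma (b + n) - digamma b + (digamma (c + n) - digamma c) -
        (digamma (a + n) - digamma a)) +
      ∑' n, pochTerm a b c z n * (digamma b + digamma c - digamma a - L) := by
  have hderiv := summable_sum_prod_erase_mul_pochFactorDeriv (a := a) hb hc z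
  simp only [sum_prod_erase_mul_pochFactorDeriv ha (ne_neg_natCast_of_pos hb)
    (ne_neg_natCast_of_pos hc)] at hderiv
  rw [← hderiv.tsum_add ((summable_pochTerm hb hc z).mul_right _)]
  exact tsum_congr fun n => by ring

end ShiftedSeries

lemma pochTerm_one (a c z : ℝ) (n : ℕ) :
    pochTerm a 1 c z n = poch a n / (n ! * poch c n) * z ^ n := by
  rw [pochTerm, poch_one]

lemma hasDerivAt_rpow_add {t : ℝ} (ht : 0 < t) (s : ℝ) :
    HasDerivAt (fun ε => t ^ (s + ε)) (t ^ s * Real.log t) 0 := by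
  simpa using (Real.hasStrictDerivAt_const_rpow ht (s + 0)).hasDerivAt.comp_const_add s 0

lemma hasDerivAt_Gamma_sub {x : ℝ} (hx : ∀ m : ℕ, x ≠ -m) :
    HasDerivAt (fun ε => Real.Gamma (x - ε)) (-(digamma x * Real.Gamma x)) 0 := by
  simpa using (hasDerivAt_Gamma (x := x - 0) (by simpa using hx)).comp_const_sub x 0

lemma hasDerivAt_rpow_mul_Gamma_ratio {t s x y w : ℝ} (ht : 0 < t) (hx : ∀ m : ℕ, x ≠ -m)
    (hy : ∀ m : ℕ, y ≠ -m) (hw : ∀ m : ℕ, w ≠ -m) :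
    HasDerivAt (fun ε => t ^ (s + ε) *
        (Real.Gamma (x - ε) * Real.Gamma (y - ε) / Real.Gamma (w - ε)))
      (t ^ s * (Real.Gamma x * Real.Gamma y / Real.Gamma w) *
        (Real.log t + digamma w - digamma x - digamma y)) 0 := by
  have hw₀ := Real.Gamma_ne_zero hw
  refine ((hasDerivAt_rpow_add ht s).mul (((hasDerivAt_Gamma_sub hx).mul
    (hasDerivAt_Gamma_sub hy)).div (hasDerivAt_Gamma_sub hw) (by simpa using hw₀))).congr_deriv ?_
  simp only [Pi.mul_apply, Pi.div_apply, sub_zero, add_zero]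
  field_simp
  ring

lemma sqrt_one_sub_eight_mul_mem {lam ξ : ℝ} (hlam : lam ∈ Set.Ioo (0 : ℝ) (1/8))
    (hξ : ξ = Real.sqrt (1 - 8 * lam)) : 0 < ξ ∧ ξ < 1 ∧ ξ ^ 2 = 1 - 8 * lam := by
  obtain ⟨hlam₀, hlam₁⟩ := hlam
  have hξ_sq : ξ ^ 2 = 1 - 8 * lam := hξ ▸ Real.sq_sqrt (by linarith)
  have hξ₀ : 0 < ξ := hξ ▸ Real.sqrt_pos.2 (by linarith)
  exact ⟨hξ₀, by nlinarith, hξ_sq⟩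

/-- `ε · F((1 + ξ)/2 + ε)`, with `Γ(-ε)` replaced by `-Γ(1 - ε)/ε`. -/
noncomputable def momentNumerator (A lam ξ C ε : ℝ) : ℝ :=
  2 * lam * A ^ (1/2 + ξ/2 + ε) *
      (∑' n, pochTerm (-(1 + ξ) / 2 - ε) (1 - ε) (1 - ξ - ε) (2 / A) n) / (ε + ξ) -
    C * (2 ^ (1/2 + ξ/2 + ε) *
      (Real.Gamma (1 - ε) * Real.Gamma (-ξ - ε) / Real.Gamma (-(1 + ξ) / 2 - ε)))

noncomputable def momentConstant (A ξ : ℝ) : ℝ :=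
  ((1 - ξ) / (2 * Real.Gamma (1 - ξ))) * (A / 2) ^ ((1 + ξ) / 2) *
    Real.Gamma ((1 - ξ) / 2) * F11 (-(1 + ξ) / 2) (1 - ξ) (2 / A)

section MomentNumerator

variable {A lam ξ C : ℝ}

lemma moment_formula_eq_inv_mul_momentNumerator (hξ_sq : ξ ^ 2 = 1 - 8 * lam) {s ε : ℝ}
    (hs : s = 1/2 + ξ/2 + ε) (hε : ε ≠ 0) :
    2 * lam * A ^ s / (s * (s - 1) + 2 * lam) *
        F22 1 (-s) (3/2 + ξ/2 - s) (3/2 - ξ/2 - s) (2 / A) +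
      C * 2 ^ s * Real.Gamma (1/2 + ξ/2 - s) * Real.Gamma (1/2 - ξ/2 - s) / Real.Gamma (-s) =
    ε⁻¹ * momentNumerator A lam ξ C ε := by
  have hΓε : Real.Gamma (-ε) = -Real.Gamma (1 - ε) / ε := by
    rw [← neg_add_eq_sub, Real.Gamma_add_one (neg_ne_zero.2 hε)]
    field_simp
  subst hs
  rw [show (1/2 + ξ/2 + ε) * (1/2 + ξ/2 + ε - 1) + 2 * lam = ε * (ε + ξ) by
      linear_combination hξ_sq / 4,
    show 3/2 + ξ/2 - (1/2 + ξ/2 + ε) = 1 - ε by ring,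
    show 3/2 - ξ/2 - (1/2 + ξ/2 + ε) = 1 - ξ - ε by ring,
    show 1/2 + ξ/2 - (1/2 + ξ/2 + ε) = -ε by ring,
    show 1/2 - ξ/2 - (1/2 + ξ/2 + ε) = -ξ - ε by ring,
    show -(1/2 + ξ/2 + ε) = -(1 + ξ) / 2 - ε by ring,
    F22_one_eq_tsum_pochTerm, hΓε, momentNumerator]
  field_simp
  ring

lemma C_mul_Gamma_ratio (hA : 0 < A) (hξ₀ : 0 < ξ) (hξ₁ : ξ < 1) (hξ_sq : ξ ^ 2 = 1 - 8 * lam)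
    (hC : C = momentConstant A ξ) :
    C * (2 ^ (1/2 + ξ/2) * (Real.Gamma 1 * Real.Gamma (-ξ) / Real.Gamma (-(1 + ξ) / 2))) =
      2 * lam * A ^ (1/2 + ξ/2) * (∑' n, pochTerm (-(1 + ξ) / 2) 1 (1 - ξ) (2 / A) n) / ξ := by
  rw [hC, momentConstant]
  set a := -(1 + ξ) / 2 with ha_def
  have hΓ₁ : Real.Gamma (1 - ξ) = -ξ * Real.Gamma (-ξ) := by
    rw [← Real.Gamma_add_one (neg_ne_zero.2 hξ₀.ne'), neg_add_eq_sub]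
  have hΓ₂ : Real.Gamma ((1 - ξ) / 2) = a * Real.Gamma a := by
    rw [← Real.Gamma_add_one (by linarith), ha_def]
    ring_nf
  have hΓa := Real.Gamma_ne_zero (ne_neg_natCast_of_mem_Ioo (x := a) ⟨by linarith, by linarith⟩)
  have hΓξ := Real.Gamma_ne_zero (ne_neg_natCast_of_mem_Ioo (x := -ξ) ⟨by linarith, by linarith⟩)
  rw [hΓ₁, hΓ₂, Real.div_rpow hA.le zero_le_two, ← F11_eq_tsum_pochTerm,
    show (1 + ξ) / 2 = 1/2 + ξ/2 by ring, Real.Gamma_one]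
  field_simp
  rw [ha_def]
  linear_combination (-F11 (-(1 + ξ) / 2) (1 - ξ) (2 / A) / 2) * hξ_sq

lemma momentNumerator_zero (hA : 0 < A) (hξ₀ : 0 < ξ) (hξ₁ : ξ < 1)
    (hξ_sq : ξ ^ 2 = 1 - 8 * lam) (hC : C = momentConstant A ξ) :
    momentNumerator A lam ξ C 0 = 0 := by
  simp only [momentNumerator, add_zero, zero_add, sub_zero]
  rw [C_mul_Gamma_ratio hA hξ₀ hξ₁ hξ_sq hC, sub_self]

theorem hasDerivAt_momentNumerator (hA : 0 < A) (hξ₀ : 0 < ξ) (hξ₁ : ξ < 1)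
    (hξ_sq : ξ ^ 2 = 1 - 8 * lam) (hC : C = momentConstant A ξ) :
    HasDerivAt (momentNumerator A lam ξ C) ((2 * lam / ξ) * A ^ (1/2 + ξ/2) *
        ∑' j : ℕ,
          poch (-(1 + ξ) / 2) j / ((Nat.factorial j : ℝ) * poch (1 - ξ) j) * (2 / A) ^ j *
            (digamma (1 + j) + digamma (1 - ξ + j) - digamma (-(1 + ξ) / 2 + j) -
              Real.log (2 / A))) 0 := by
  set a := -(1 + ξ) / 2 with ha_def
  have ha : ∀ m : ℕ, a ≠ -m := ne_neg_natCast_of_mem_Ioo ⟨by linarith, by linarith⟩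
  have hnegξ : ∀ m : ℕ, -ξ ≠ -m := ne_neg_natCast_of_mem_Ioo ⟨by linarith, by linarith⟩
  have hP := (((hasDerivAt_rpow_add hA (1/2 + ξ/2)).const_mul (2 * lam)).mul
    (hasDerivAt_tsum_pochTerm_sub ha one_pos (sub_pos.2 hξ₁) (2 / A))).div
    ((hasDerivAt_id 0).add_const ξ) (by simpa using hξ₀.ne')
  have hQ := (hasDerivAt_rpow_mul_Gamma_ratio (s := 1/2 + ξ/2) two_pos
    (ne_neg_natCast_of_pos one_pos) hnegξ ha).const_mul C
  refine (hP.sub hQ).congr_deriv ?_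
  have hψ : digamma (1 - ξ) = digamma (-ξ) - 1 / ξ := by
    rw [← neg_add_eq_sub, digamma_add_one hnegξ]
    ring
  simp only [← pochTerm_one, Pi.mul_apply, id, add_zero, zero_add, sub_zero]
  rw [← mul_assoc C, C_mul_Gamma_ratio hA hξ₀ hξ₁ hξ_sq hC,
    tsum_pochTerm_mul_digamma ha one_pos (sub_pos.2 hξ₁), tsum_mul_right, ← ha_def]
  -- freeze the derivative series, so that `hψ` rewrites only the constant term
  set D := ∑' n, pochTerm a 1 (1 - ξ) (2 / A) n * (digamma (1 + n) - digamma 1 +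
    (digamma (1 - ξ + n) - digamma (1 - ξ)) - (digamma (a + n) - digamma a))
  rw [hψ, Real.log_div two_ne_zero hA.ne']
  field_simp
  ring

end MomentNumerator

/-- The point `s = 1/2 + ξ/2` is a removable singularity of the explicit fractional-moment
formula `F`: the limit of `F(1/2 + ξ/2 + ε)` as `ε → 0`, `ε ≠ 0`, exists and equals
`(2λ/ξ)·A^{1/2+ξ/2}·Σ_{j≥0} ((−(1+ξ)/2)_j/(j!·(1−ξ)_j))·(2/A)^j·
  [ψ(1+j) + ψ(1−ξ+j) − ψ(−(1+ξ)/2+j) − log(2/A)]`. -/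
theorem removable_singularity_of_moment_formula
    (A lam : ℝ) (hA : 0 < A) (hlam : lam ∈ Set.Ioo (0 : ℝ) (1/8))
    (ξ : ℝ) (hξ : ξ = Real.sqrt (1 - 8 * lam))
    (C : ℝ)
    (hC : C = ((1 - ξ) / (2 * Real.Gamma (1 - ξ))) * (A / 2) ^ ((1 + ξ) / 2) *
      Real.Gamma ((1 - ξ) / 2) * F11 (-(1 + ξ) / 2) (1 - ξ) (2 / A))
    (F : ℝ → ℝ)
    (hF : ∀ s : ℝ, F s =
      (2 * lam * A ^ s) / (s * (s - 1) + 2 * lam) *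
          F22 1 (-s) (3/2 + ξ/2 - s) (3/2 - ξ/2 - s) (2 / A) +
        C * 2 ^ s * Real.Gamma (1/2 + ξ/2 - s) * Real.Gamma (1/2 - ξ/2 - s) /
          Real.Gamma (-s)) :
    Filter.Tendsto (fun ε : ℝ => F (1/2 + ξ/2 + ε)) (nhdsWithin 0 {(0 : ℝ)}ᶜ)
      (nhds ((2 * lam / ξ) * A ^ (1/2 + ξ/2) *
        ∑' j : ℕ,
          poch (-(1 + ξ) / 2) j / ((Nat.factorial j : ℝ) * poch (1 - ξ) j) * (2 / A) ^ j *
            (digamma (1 + j) + digamma (1 - ξ + j) - digamma (-(1 + ξ) / 2 + j) -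
              Real.log (2 / A)))) := by
  obtain ⟨hξ₀, hξ₁, hξ_sq⟩ := sqrt_one_sub_eight_mul_mem hlam hξ
  refine (hasDerivAt_momentNumerator hA hξ₀ hξ₁ hξ_sq hC).tendsto_slope_zero.congr'
    (eventually_nhdsWithin_of_forall fun ε hε => ?_)
  dsimp only
  rw [hF, momentNumerator_zero hA hξ₀ hξ₁ hξ_sq hC, zero_add, sub_zero, smul_eq_mul,
    moment_formula_eq_inv_mul_momentNumerator hξ_sq rfl hε]
end

section
/- Fix A > 0 and λ ∈ (0, 1/8), set ξ = √(1 − 8λ) ∈ (0, 1), and let s₀ = 1/2 + ξ/2. Suppose f : ℝ → ℝ satisfies (s(s−1)/2 + λ)·f(s) + s·f(s−1) = λ·A^s for all s ∈ ℝ. Then for every k ∈ ℕ, f(s₀ + k) = ((−2)^k · (3/2 + ξ/2)_k / (k! · (1 + ξ)_k)) · [ f(s₀) − (2λ/(3 + ξ)) · A^{s₀ + 1} · Σ_{j=0}^{k−1} (−A/2)^j · j! · (1 + ξ)_j / (5/2 + ξ/2)_j ]. -/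
/-!
Writing `f(s₀ + k) = P k · y k`, where `P` is the solution of the homogeneous recurrence with
`P 0 = 1`, turns the forward iteration into a telescoping sum for `y`. Along `s₀ + ℕ` the coefficient
of `f(s₀ + k + 1)` factors as `(k + 1)(ξ + k + 1)/2`, because `s₀` and `1 - s₀` are the roots of
`s(s - 1)/2 + λ`; hence `P` is a ratio of Pochhammer symbols, and so is each summand.
-/

open scoped BigOperators

open Finset Nat

lemma poch_succ (z : ℝ) (n : ℕ) : poch z (n + 1) = poch z n * (z + n) := rfl

lemma poch_succ_eq_mul_poch_add_one (z : ℝ) (n : ℕ) : poch z (n + 1) = z * poch (z + 1) n := by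
  induction n with
  | zero => simp [poch]
  | succ n ih => rw [poch_succ, ih, poch_succ]; push_cast; ring

lemma poch_pos {z : ℝ} (hz : 0 < z) (n : ℕ) : 0 < poch z n := by
  induction n with
  | zero => simp [poch]
  | succ n ih => exact mul_pos ih (by positivity)

/-- Variation of constants for a first-order linear recurrence. -/
theorem eq_mul_add_sum_of_linear_recurrence {K : Type*} [Field K] {x r d P : ℕ → K}
    (hx : ∀ k, x (k + 1) = r k * x k + d k) (hP₀ : P 0 = 1) (hP : ∀ k, P (k + 1) = r k * P k)
    (hP_ne : ∀ k, P k ≠ 0) (k : ℕ) :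
    x k = P k * (x 0 + ∑ j ∈ range k, d j / P (j + 1)) := by
  induction k with
  | zero => simp [hP₀]
  | succ k ih =>
    have hcancel : P (k + 1) * (d k / P (k + 1)) = d k := mul_div_cancel₀ _ (hP_ne (k + 1))
    rw [hx, ih, sum_range_succ]
    linear_combination (-(x 0 + ∑ j ∈ range k, d j / P (j + 1))) * hP k - hcancel

namespace ShiryaevMoments

/-- The solution of the homogeneous recurrence along `s₀ + ℕ` with value `1` at `s₀`. -/
noncomputable def homogeneousSolution (ξ : ℝ) (k : ℕ) : ℝ :=
  (-2 : ℝ) ^ k * poch (3/2 + ξ/2) k / ((k ! : ℝ) * poch (1 + ξ) k)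

variable {ξ : ℝ}

lemma homogeneousSolution_ne_zero (hξ : 0 ≤ ξ) (k : ℕ) : homogeneousSolution ξ k ≠ 0 := by
  have h₁ := poch_pos (z := 3/2 + ξ/2) (by linarith) k
  have h₂ := poch_pos (z := 1 + ξ) (by linarith) k
  unfold homogeneousSolution
  positivity

lemma homogeneousSolution_succ (hξ : 0 ≤ ξ) (k : ℕ) :
    homogeneousSolution ξ (k + 1) =
      -(3/2 + ξ/2 + k) / ((k + 1) * (ξ + k + 1) / 2) * homogeneousSolution ξ k := by
  have h₁ := poch_pos (z := 1 + ξ) (by linarith) k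
  have h₂ : (ξ + k + 1 : ℝ) ≠ 0 := by positivity
  unfold homogeneousSolution
  rw [poch_succ, poch_succ, factorial_succ]
  push_cast
  field_simp
  ring

lemma forcing_div_homogeneousSolution_succ (hξ : 0 ≤ ξ) (a A : ℝ) (j : ℕ) :
    a * A ^ j / ((j + 1) * (ξ + j + 1) / 2) / homogeneousSolution ξ (j + 1) =
      -(2 * a / (3 + ξ)) *
        ((-(A / 2)) ^ j * (j ! : ℝ) * poch (1 + ξ) j / poch (5/2 + ξ/2) j) := by
  have h₁ := poch_pos (z := 1 + ξ) (by linarith) j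
  have h₂ := poch_pos (z := 5/2 + ξ/2) (by linarith) j
  have h₃ : (ξ + j + 1 : ℝ) ≠ 0 := by positivity
  have h₄ : (3 + ξ : ℝ) ≠ 0 := by positivity
  unfold homogeneousSolution
  rw [poch_succ_eq_mul_poch_add_one (3/2 + ξ/2), poch_succ, factorial_succ,
    show (3/2 + ξ/2 + 1 : ℝ) = 5/2 + ξ/2 by ring, show -(A / 2) = A / (-2) by ring, div_pow]
  push_cast
  field_simp
  ring

end ShiryaevMoments

open ShiryaevMoments in
/-- Iterating the fractional-moment recurrence forward from `s₀ = 1/2 + ξ/2`: any solution `f`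
of `(s(s−1)/2+λ)·f(s) + s·f(s−1) = λ·A^s` satisfies, for every `k ∈ ℕ`,
`f(s₀+k) = ((−2)^k (3/2+ξ/2)_k/(k!(1+ξ)_k))·
  [f(s₀) − (2λ/(3+ξ))·A^{s₀+1}·Σ_{j=0}^{k−1} (−A/2)^j j! (1+ξ)_j/(5/2+ξ/2)_j]`. -/
theorem recurrence_iterated_from_singular_point
    (A lam : ℝ) (hA : 0 < A) (hlam : lam ∈ Set.Ioo (0 : ℝ) (1/8))
    (ξ : ℝ) (hξ : ξ = Real.sqrt (1 - 8 * lam))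
    (s₀ : ℝ) (hs₀ : s₀ = 1/2 + ξ/2)
    (f : ℝ → ℝ)
    (hf : ∀ s : ℝ, (s * (s - 1) / 2 + lam) * f s + s * f (s - 1) = lam * A ^ s) :
    ∀ k : ℕ,
      f (s₀ + k) =
        ((-2 : ℝ) ^ k * poch (3/2 + ξ/2) k / ((Nat.factorial k : ℝ) * poch (1 + ξ) k)) *
          (f s₀ - (2 * lam / (3 + ξ)) * A ^ (s₀ + 1) *
            ∑ j ∈ Finset.range k,
              (-(A / 2)) ^ j * (Nat.factorial j : ℝ) * poch (1 + ξ) j / poch (5/2 + ξ/2) j) := by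
  have hξ₀ : 0 ≤ ξ := hξ ▸ Real.sqrt_nonneg _
  have hlam_eq : lam = (1 - ξ ^ 2) / 8 := by
    rw [hξ, Real.sq_sqrt (by linarith [hlam.2])]; ring
  have step (k : ℕ) : f (s₀ + (k + 1 : ℕ)) =
      -(3/2 + ξ/2 + k) / ((k + 1) * (ξ + k + 1) / 2) * f (s₀ + k) +
        lam * A ^ (s₀ + 1) * A ^ k / ((k + 1) * (ξ + k + 1) / 2) := by
    have h := hf (s₀ + (k + 1 : ℕ))
    have hs : s₀ + ((k + 1 : ℕ) : ℝ) = (s₀ + 1) + k := by push_cast; ring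
    rw [hs, Real.rpow_add_natCast hA.ne', show s₀ + 1 + k - 1 = s₀ + k by ring] at h
    rw [hs]
    have hc : (ξ + k + 1 : ℝ) ≠ 0 := by positivity
    field_simp
    subst hs₀ hlam_eq
    linear_combination 2 * h
  intro k
  refine (eq_mul_add_sum_of_linear_recurrence (x := fun k : ℕ => f (s₀ + k)) step
    (by simp [homogeneousSolution, poch]) (homogeneousSolution_succ hξ₀)
    (homogeneousSolution_ne_zero hξ₀) k).trans ?_
  simp only [forcing_div_homogeneousSolution_succ hξ₀, ← mul_sum, CharP.cast_eq_zero, add_zero]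
  unfold homogeneousSolution
  ring
end
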